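/- arXiv:1501.04313 — 3 statements merged into one kernel-verified Lean document; each statement's English description precedes it below -/
import Mathlib

section
/- Fix a finite symbol alphabet Λ, regular languages L_1 and L_2 over Λ, and a fixed word x ∈ Λ*. Then the set {⊗(zw, zxw) : z ∈ L_1, w ∈ L_2} of convolutions is a regular language. -/
/-!
Since `⊗(zw, zxw) = δ(z) ++ ⊗(w, xw)` for the diagonal letter map `δ a = (a, a)`, the language is
the product of `δ(L₁)` with `D_x(L₂) = {⊗(w, xw) : w ∈ L₂}` (`delayedConv L₂ x`). Regularity is
checked with the Myhill–Nerode theorem throughout: products and letter-to-letter images of regular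
languages have finitely many left quotients, and the left quotient of `D_q(L)` by a letter `(a, b)`
is again of the form `D_t(L')`, where `t` is `q ++ [a]` with its first letter (which must be `b`)
removed, or the tail of `q` once the upper track has ended, and `L'` is a left quotient of `L`,
`0` or `1`. Over a finite alphabet only finitely many such `D_t(L')` with `|t| ≤ |x|` exist.
-/

/-- The convolution of a pair of words over `Λ`: read the two words in parallel,
padding the shorter with `⋄` (modelled by `none`). -/
def conv2 {Λ : Type} (u v : List Λ) : List (Option Λ × Option Λ) :=
  (List.range (max u.length v.length)).map (fun i => (u[i]?, v[i]?))

namespace Language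

variable {α β : Type*}

theorem mem_sSup {𝓛 : Set (Language α)} {v : List α} : v ∈ sSup 𝓛 ↔ ∃ L ∈ 𝓛, v ∈ L :=
  Set.mem_sUnion

theorem mem_map {f : α → β} {L : Language α} {v : List β} :
    v ∈ map f L ↔ ∃ u ∈ L, u.map f = v :=
  Iff.rfl

@[simp]
theorem leftQuotient_zero (u : List α) : (0 : Language α).leftQuotient u = 0 :=
  rfl

@[simp]
theorem leftQuotient_one_singleton (a : α) : (1 : Language α).leftQuotient [a] = 0 := by
  ext v
  simp [mem_one]

theorem IsRegular.of_leftQuotient_mem {F : Set (Language α)} {L : Language α} (hF : F.Finite)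
    (hL : L ∈ F) (hstep : ∀ M ∈ F, ∀ a, M.leftQuotient [a] ∈ F) : L.IsRegular := by
  refine .of_finite_range_leftQuotient (hF.subset ?_)
  rintro _ ⟨u, rfl⟩
  induction u using List.reverseRecOn with
  | nil => exact hL
  | append_singleton u a ih => rw [leftQuotient_append]; exact hstep _ ih a

theorem leftQuotient_mul (L M : Language α) (u : List α) :
    (L * M).leftQuotient u =
      L.leftQuotient u * M + sSup (M.leftQuotient '' {s | ∃ r ∈ L, r ++ s = u}) := by
  ext v
  simp only [mem_leftQuotient, mem_add, mem_mul, mem_sSup, Set.exists_mem_image, Set.mem_ofPred_eq]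
  constructor
  · rintro ⟨r, hr, t, ht, h⟩
    rcases List.append_eq_append_iff.1 h with ⟨s, rfl, rfl⟩ | ⟨s, rfl, rfl⟩
    · exact .inr ⟨s, ⟨r, hr, rfl⟩, ht⟩
    · exact .inl ⟨s, hr, t, ht, rfl⟩
  · rintro (⟨s, hs, t, ht, rfl⟩ | ⟨s, ⟨r, hr, rfl⟩, hs⟩)
    · exact ⟨u ++ s, hs, t, ht, List.append_assoc ..⟩
    · exact ⟨r, hr, s ++ v, hs, (List.append_assoc ..).symm⟩

theorem IsRegular.mul {L M : Language α} (hL : L.IsRegular) (hM : M.IsRegular) :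
    (L * M).IsRegular := by
  refine .of_finite_range_leftQuotient ((hL.finite_range_leftQuotient.image2
    (fun A 𝓑 => A * M + sSup 𝓑) hM.finite_range_leftQuotient.finite_subsets).subset ?_)
  rintro _ ⟨u, rfl⟩
  exact ⟨_, ⟨u, rfl⟩, _, Set.image_subset_range _ _, (leftQuotient_mul L M u).symm⟩

theorem leftQuotient_map (f : α → β) (L : Language α) (u : List β) :
    (map f L).leftQuotient u = sSup (map f '' (L.leftQuotient '' {u' | u'.map f = u})) := by
  ext v
  simp only [mem_leftQuotient, mem_sSup, Set.exists_mem_image, Set.mem_ofPred_eq, mem_map]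
  constructor
  · rintro ⟨y, hy, h⟩
    obtain ⟨u', v', rfl, rfl, rfl⟩ := List.map_eq_append_iff.1 h
    exact ⟨u', rfl, v', hy, rfl⟩
  · rintro ⟨u', rfl, v', hv', rfl⟩
    exact ⟨u' ++ v', hv', List.map_append ..⟩

theorem IsRegular.map {L : Language α} (hL : L.IsRegular) (f : α → β) :
    (Language.map f L).IsRegular := by
  refine .of_finite_range_leftQuotient ((hL.finite_range_leftQuotient.finite_subsets.image
    (fun 𝓐 => sSup (Language.map f '' 𝓐))).subset ?_)
  rintro _ ⟨u, rfl⟩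
  exact ⟨_, Set.image_subset_range _ _, (leftQuotient_map f L u).symm⟩

end Language

section DelayedConvolution

variable {Λ : Type}

@[simp]
theorem conv2_nil_nil : conv2 ([] : List Λ) [] = [] :=
  rfl

theorem conv2_cons_cons (a b : Λ) (u v : List Λ) :
    conv2 (a :: u) (b :: v) = (some a, some b) :: conv2 u v := by
  simp [conv2, List.range_succ_eq_map, Nat.add_max_add_right]

theorem conv2_nil_cons (b : Λ) (v : List Λ) :
    conv2 [] (b :: v) = (none, some b) :: conv2 [] v := by
  simp [conv2, List.range_succ_eq_map]

theorem conv2_append_append (z u v : List Λ) :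
    conv2 (z ++ u) (z ++ v) = z.map (fun a => (some a, some a)) ++ conv2 u v := by
  induction z with
  | nil => rfl
  | cons a z ih => simp [conv2_cons_cons, ih]

theorem conv2_cons_append_cons {q t : List Λ} {a h : Λ} (hq : q ++ [a] = h :: t) (w : List Λ) :
    conv2 (a :: w) (q ++ a :: w) = (some a, some h) :: conv2 w (t ++ w) := by
  rw [← conv2_cons_cons, ← List.cons_append, ← hq, List.append_assoc, List.singleton_append]

/-- The convolutions `⊗(w, q w)` for `w ∈ L`: the lower track is the upper one delayed by `q`. -/
def delayedConv (L : Language Λ) (q : List Λ) : Language (Option Λ × Option Λ) :=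
  {c | ∃ w ∈ L, c = conv2 w (q ++ w)}

theorem mem_delayedConv {L : Language Λ} {q : List Λ} {c : List (Option Λ × Option Λ)} :
    c ∈ delayedConv L q ↔ ∃ w ∈ L, c = conv2 w (q ++ w) :=
  Iff.rfl

@[simp]
theorem delayedConv_zero (q : List Λ) : delayedConv 0 q = 0 := by
  ext c
  simp [mem_delayedConv]

open Classical in
theorem leftQuotient_delayedConv_some (L : Language Λ) {q t : List Λ} {a h : Λ}
    (hq : q ++ [a] = h :: t) (b : Option Λ) :
    (delayedConv L q).leftQuotient [(some a, b)] =
      delayedConv (if b = some h then L.leftQuotient [a] else 0) t := by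
  ext v
  simp only [Language.mem_leftQuotient, List.singleton_append]
  constructor
  · rintro ⟨_ | ⟨a', w⟩, hw, hv⟩
    · cases q <;> simp [conv2_nil_cons] at hv
    · obtain ⟨h', t', hq'⟩ := List.exists_cons_of_ne_nil (List.concat_ne_nil a' q)
      rw [conv2_cons_append_cons hq'] at hv
      obtain ⟨⟨rfl, rfl⟩, rfl⟩ := hv
      obtain ⟨rfl, rfl⟩ := List.cons_eq_cons.1 (hq.symm.trans hq')
      rw [if_pos rfl]
      exact ⟨w, hw, rfl⟩
  · split_ifs with hb
    · rintro ⟨w, hw, rfl⟩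
      exact ⟨a :: w, hw, by rw [conv2_cons_append_cons hq, hb]⟩
    · simp

theorem leftQuotient_delayedConv_none_nil (L : Language Λ) (b : Option Λ) :
    (delayedConv L []).leftQuotient [(none, b)] = 0 := by
  ext v
  simp only [Language.mem_leftQuotient, List.singleton_append, mem_delayedConv,
    List.nil_append, Language.notMem_zero, iff_false, not_exists, not_and]
  rintro (_ | ⟨a, w⟩) - h
  · simp at h
  · simp [conv2_cons_cons] at h

open Classical in
theorem leftQuotient_delayedConv_none_cons (L : Language Λ) (h : Λ) (q : List Λ) (b : Option Λ) :
    (delayedConv L (h :: q)).leftQuotient [(none, b)] =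
      delayedConv (if [] ∈ L ∧ b = some h then 1 else 0) q := by
  ext v
  simp only [Language.mem_leftQuotient, List.singleton_append, mem_delayedConv]
  constructor
  · rintro ⟨_ | ⟨a, w⟩, hw, hv⟩
    · rw [List.append_nil, conv2_nil_cons] at hv
      obtain ⟨⟨-, rfl⟩, rfl⟩ := hv
      rw [if_pos ⟨hw, rfl⟩]
      exact ⟨[], rfl, by rw [List.append_nil]⟩
    · simp [conv2_cons_cons] at hv
  · split_ifs with hb
    · rintro ⟨w, rfl, rfl⟩
      exact ⟨[], hb.1, by rw [List.append_nil, List.append_nil, conv2_nil_cons, hb.2]⟩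
    · simp

theorem isRegular_delayedConv [Finite Λ] {L : Language Λ} (hL : L.IsRegular) (q : List Λ) :
    (delayedConv L q).IsRegular := by
  set 𝓛 : Set (Language Λ) := insert 0 (insert 1 (Set.range L.leftQuotient))
  have h𝓛 : ∀ L' ∈ 𝓛, ∀ a, L'.leftQuotient [a] ∈ 𝓛 := by
    rintro _ (rfl | rfl | ⟨u, rfl⟩) a
    · simp [𝓛]
    · simp [𝓛]
    · exact .inr (.inr ⟨u ++ [a], Language.leftQuotient_append ..⟩)
  refine .of_leftQuotient_mem (F := Set.image2 delayedConv 𝓛 {t | t.length ≤ q.length})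
    ((hL.finite_range_leftQuotient.insert _ |>.insert _).image2 _ (List.finite_length_le Λ _))
    ⟨L, .inr (.inr ⟨[], rfl⟩), q, le_refl q.length, rfl⟩ ?_
  rintro _ ⟨L', hL', t, ht, rfl⟩ ⟨_ | a, b⟩
  · cases t with
    | nil =>
      rw [leftQuotient_delayedConv_none_nil]
      exact ⟨0, .inl rfl, [], Nat.zero_le _, delayedConv_zero _⟩
    | cons h t =>
      rw [leftQuotient_delayedConv_none_cons]
      refine ⟨_, ?_, t, by simp at ht ⊢; omega, rfl⟩
      split_ifs <;> simp [𝓛]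
  · obtain ⟨h, t', ht'⟩ := List.exists_cons_of_ne_nil (List.concat_ne_nil a t)
    rw [leftQuotient_delayedConv_some L' ht']
    have hlen := congrArg List.length ht'
    refine ⟨_, ?_, t', by simp at hlen ht ⊢; omega, rfl⟩
    split_ifs
    · exact h𝓛 L' hL' a
    · simp [𝓛]

end DelayedConvolution

/-- For regular languages `L₁, L₂` over a finite alphabet `Λ` and a fixed word
`x ∈ Λ*`, the language `{⊗(zw, zxw) : z ∈ L₁, w ∈ L₂}` is regular. -/
theorem convolution_insert_fixed_word_regular {Λ : Type} [Fintype Λ]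
    (L₁ L₂ : Language Λ) (hL₁ : L₁.IsRegular) (hL₂ : L₂.IsRegular) (x : List Λ) :
    Language.IsRegular
      {c : List (Option Λ × Option Λ) |
        ∃ z ∈ L₁, ∃ w ∈ L₂, c = conv2 (z ++ w) (z ++ x ++ w)} := by
  have hsplit : {c : List (Option Λ × Option Λ) |
        ∃ z ∈ L₁, ∃ w ∈ L₂, c = conv2 (z ++ w) (z ++ x ++ w)} =
      Language.map (fun a => (some a, some a)) L₁ * delayedConv L₂ x := by
    refine Language.ext fun c => ?_
    rw [Language.mem_mul]
    simp only [Language.mem_map, mem_delayedConv, List.append_assoc, conv2_append_append]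
    constructor
    · rintro ⟨z, hz, w, hw, rfl⟩
      exact ⟨_, ⟨z, hz, rfl⟩, _, ⟨w, hw, rfl⟩, rfl⟩
    · rintro ⟨_, ⟨z, hz, rfl⟩, _, ⟨w, hw, rfl⟩, rfl⟩
      exact ⟨z, hz, w, hw, rfl⟩
  rw [hsplit]
  exact (hL₁.map _).mul (isRegular_delayedConv hL₂ x)
end

section
/- Let g ∈ F have standard infinite normal form x_{i_1}^{e_1} ⋯ x_{i_m}^{e_m} x_{j_n}^{-f_n} ⋯ x_{j_1}^{-f_1}, set D = Σ e_l + Σ f_l + i_m + j_n, and let D' = Σ e_l + Σ f_l + max{i_m, j_n} be the length of its L_∞ normal form. Then D ≤ D' (interpreting D with the convention of the paper) fails in general, but D' ≤ D ≤ 2D' and consequently D'/12 − 2 ≤ l(g) ≤ 3D', where l(g) is word length with respect to {x_0, x_1}; hence L_∞ is a quasigeodesic normal form. -/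
/-- The relators of Thompson's group `F` in its standard infinite presentation:
`x_j x_i = x_i x_{j+1}` whenever `i < j`. -/
def thompsonRels : Set (FreeGroup ℕ) :=
  {r | ∃ i j : ℕ, i < j ∧
    r = FreeGroup.of j * FreeGroup.of i * (FreeGroup.of (j + 1))⁻¹ * (FreeGroup.of i)⁻¹}

/-- Thompson's group `F`, presented by `⟨x_0, x_1, … | x_j x_i = x_i x_{j+1} (i < j)⟩`. -/
abbrev ThompsonF : Type := PresentedGroup thompsonRels

/-- The generator `x_n` of Thompson's group `F`. -/
def x (n : ℕ) : ThompsonF := PresentedGroup.of n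

/-- Word length of `g ∈ F` with respect to the generating set `{x_0^{±1}, x_1^{±1}}`. -/
noncomputable def wlen (g : ThompsonF) : ℕ :=
  sInf {n | ∃ w : List ThompsonF, w.length = n ∧
    (∀ y ∈ w, y ∈ ({x 0, (x 0)⁻¹, x 1, (x 1)⁻¹} : Set ThompsonF)) ∧ w.prod = g}

/-! The relation `x_k x_0 = x_0 x_{k+1}` makes every `x_k` (`k ≥ 1`) the conjugate
`x_0^{-(k-1)} x_1 x_0^{k-1}`. In `x_{i_1}^{e_1} ⋯ x_{i_m}^{e_m}` with increasing indices the
conjugators telescope, so this product followed by `x_0^{-(i_m-1)}` is a word of length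
`Σ e + (i_m - 1)`. Doing the same for the negative part and joining the two halves through
`x_0^{(i_m-1)-(j_n-1)}` gives `l(g) ≤ Σ e + Σ f + 2 max(i_m, j_n) ≤ 2D'`. This direct bound is
needed because Burillo's `l(g) ≤ 3D` only gives `l(g) ≤ 6D'`; the lower bound is Burillo's,
since `D' ≤ D`. -/

section WordLength

variable {G : Type*} [Group G] {S : Set G}

def HasWordLE (S : Set G) (g : G) (k : ℕ) : Prop :=
  ∃ w : List G, w.length ≤ k ∧ (∀ y ∈ w, y ∈ S) ∧ w.prod = g

namespace HasWordLE

theorem of_mem {a : G} (ha : a ∈ S) : HasWordLE S a 1 :=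
  ⟨[a], le_rfl, by simpa using ha, List.prod_singleton⟩

theorem mono {a : G} {p q : ℕ} (ha : HasWordLE S a p) (hpq : p ≤ q) : HasWordLE S a q :=
  let ⟨w, hlen, hS, hprod⟩ := ha
  ⟨w, hlen.trans hpq, hS, hprod⟩

theorem mul {a b : G} {p q : ℕ} (ha : HasWordLE S a p) (hb : HasWordLE S b q) :
    HasWordLE S (a * b) (p + q) := by
  obtain ⟨v, hvlen, hvS, rfl⟩ := ha
  obtain ⟨w, hwlen, hwS, rfl⟩ := hb
  refine ⟨v ++ w, by simpa using add_le_add hvlen hwlen, ?_, List.prod_append⟩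
  simpa only [List.mem_append, or_imp, forall_and] using ⟨hvS, hwS⟩

theorem inv (hS : ∀ a ∈ S, a⁻¹ ∈ S) {a : G} {p : ℕ} (ha : HasWordLE S a p) :
    HasWordLE S a⁻¹ p := by
  obtain ⟨w, hlen, hwS, rfl⟩ := ha
  refine ⟨(w.map (·⁻¹)).reverse, by simpa using hlen, ?_, List.prod_inv_reverse w ▸ rfl⟩
  simpa using fun y hy => inv_inv y ▸ hS _ (hwS _ hy)

theorem pow {a : G} {p : ℕ} (ha : HasWordLE S a p) (t : ℕ) : HasWordLE S (a ^ t) (t * p) := by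
  induction t with
  | zero => exact ⟨[], by simp, by simp, by simp⟩
  | succ t ih => simpa only [pow_succ, Nat.succ_mul] using ih.mul ha

theorem zpow_of_mem {a : G} (ha : a ∈ S) (ha' : a⁻¹ ∈ S) (z : ℤ) :
    HasWordLE S (a ^ z) z.natAbs := by
  cases z with
  | ofNat n => simpa using (of_mem ha).pow n
  | negSucc n => simpa [zpow_negSucc, ← inv_pow] using (of_mem ha').pow (n + 1)

end HasWordLE

end WordLength

namespace ThompsonF

def gens : Set ThompsonF := {x 0, (x 0)⁻¹, x 1, (x 1)⁻¹}

theorem inv_mem_gens : ∀ a ∈ gens, a⁻¹ ∈ gens := by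
  simp only [gens, Set.mem_insert_iff, Set.mem_singleton_iff]
  rintro a (rfl | rfl | rfl | rfl) <;> simp

theorem x_min_one_mem_gens (k : ℕ) : x (min k 1) ∈ gens := by
  rcases Nat.le_one_iff_eq_zero_or_eq_one.mp (min_le_right k 1) with h | h <;> simp [h, gens]

theorem wlen_le {g : ThompsonF} {k : ℕ} (hg : HasWordLE gens g k) : wlen g ≤ k :=
  let ⟨w, hlen, hS, hprod⟩ := hg
  calc wlen g ≤ w.length := Nat.sInf_le ⟨w, rfl, hS, hprod⟩
    _ ≤ k := hlen

theorem hasWordLE_x_zero_zpow (z : ℤ) : HasWordLE gens (x 0 ^ z) z.natAbs :=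
  HasWordLE.zpow_of_mem (by simp [gens]) (by simp [gens]) z

theorem x_mul_x_zero {k : ℕ} (hk : 0 < k) : x k * x 0 = x 0 * x (k + 1) := by
  have hrel : FreeGroup.of k * FreeGroup.of 0 * (FreeGroup.of 0 * FreeGroup.of (k + 1))⁻¹ ∈
      thompsonRels := ⟨0, k, hk, by group⟩
  simpa only [x, PresentedGroup.of, map_mul] using PresentedGroup.mk_eq_mk_of_mul_inv_mem hrel

theorem x_eq_conj (k : ℕ) : x k = (x 0 ^ (k - 1))⁻¹ * x (min k 1) * x 0 ^ (k - 1) := by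
  induction k with
  | zero => simp
  | succ k ih =>
    rcases Nat.eq_zero_or_pos k with rfl | hk
    · simp
    · obtain ⟨k, rfl⟩ := Nat.exists_eq_add_one_of_ne_zero hk.ne'
      rw [eq_inv_mul_of_mul_eq (x_mul_x_zero hk).symm, ih]
      simp only [Nat.add_sub_cancel, Nat.le_add_left, min_eq_right, pow_succ]
      group

theorem semiconjBy_x (k : ℕ) : SemiconjBy (x 0 ^ (k - 1))⁻¹ (x (min k 1)) (x k) := by
  rw [SemiconjBy, x_eq_conj k]
  group

theorem hasWordLE_prod_mul_x_zero_pow_inv (i e : ℕ → ℕ) (m : ℕ) (hi : MonotoneOn i (Set.Iio m)) :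
    HasWordLE gens (((List.range m).map fun l => x (i l) ^ e l).prod * (x 0 ^ (i (m - 1) - 1))⁻¹)
      (∑ l ∈ Finset.range m, e l + (i (m - 1) - 1)) := by
  induction m with
  | zero => simpa [← zpow_natCast] using hasWordLE_x_zero_zpow (-(i 0 - 1 : ℕ))
  | succ m ih =>
    have hle : i (m - 1) - 1 ≤ i m - 1 :=
      Nat.sub_le_sub_right (hi (by simp only [Set.mem_Iio]; omega) (by simp) (by omega)) 1
    have hsplit : ((List.range (m + 1)).map fun l => x (i l) ^ e l).prod * (x 0 ^ (i m - 1))⁻¹ =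
        (((List.range m).map fun l => x (i l) ^ e l).prod * (x 0 ^ (i (m - 1) - 1))⁻¹) *
          (x 0 ^ (((i (m - 1) - 1 : ℕ) : ℤ) - (i m - 1 : ℕ)) * x (min (i m) 1) ^ e m) := by
      rw [List.range_succ, List.map_append, List.prod_append, List.map_singleton,
        List.prod_singleton, mul_assoc, ← ((semiconjBy_x (i m)).pow_right (e m)).eq, zpow_sub,
        zpow_natCast, zpow_natCast]
      group
    simp only [Nat.add_sub_cancel]
    rw [hsplit]
    refine ((ih (hi.mono (by simp))).mul ((hasWordLE_x_zero_zpow _).mul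
      ((HasWordLE.of_mem (x_min_one_mem_gens (i m))).pow (e m)))).mono ?_
    rw [Finset.sum_range_succ]
    omega

theorem wlen_normalForm_le (m n : ℕ) (i j e f : ℕ → ℕ) (hi : MonotoneOn i (Set.Iio m))
    (hj : MonotoneOn j (Set.Iio n)) :
    wlen (((List.range m).map fun l => x (i l) ^ e l).prod *
        ((List.range n).reverse.map fun l => (x (j l))⁻¹ ^ f l).prod) ≤
      ∑ l ∈ Finset.range m, e l + ∑ l ∈ Finset.range n, f l +
        2 * max (i (m - 1) - 1) (j (n - 1) - 1) := by
  set P := ((List.range m).map fun l => x (i l) ^ e l).prod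
  set Q := ((List.range n).map fun l => x (j l) ^ f l).prod
  set b := i (m - 1) - 1
  set c := j (n - 1) - 1
  have hneg : ((List.range n).reverse.map fun l => (x (j l))⁻¹ ^ f l).prod = Q⁻¹ := by
    simp [Q, List.prod_inv_reverse, List.map_reverse, inv_pow, Function.comp_def]
  have hsplit : P * Q⁻¹ = (P * (x 0 ^ b)⁻¹) * x 0 ^ ((b : ℤ) - c) * (Q * (x 0 ^ c)⁻¹)⁻¹ := by
    rw [zpow_sub, zpow_natCast, zpow_natCast]
    group
  have hP := hasWordLE_prod_mul_x_zero_pow_inv i e m hi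
  have hQ := (hasWordLE_prod_mul_x_zero_pow_inv j f n hj).inv inv_mem_gens
  rw [hneg, hsplit]
  refine wlen_le (((hP.mul (hasWordLE_x_zero_zpow _)).mul hQ).mono ?_)
  omega

end ThompsonF

open ThompsonF in
theorem Linf_quasigeodesic_general (m n : ℕ)
    (i j e f : ℕ → ℕ)
    (hi : ∀ a b, a < b → b < m → i a < i b) (hj : ∀ a b, a < b → b < n → j a < j b)
    (g : ThompsonF)
    (hg : g = (((List.range m).map fun l => x (i l) ^ e l).prod) *
      (((List.range n).reverse.map fun l => (x (j l))⁻¹ ^ f l).prod))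
    (D D' : ℕ)
    (hD : D = ∑ l ∈ Finset.range m, e l + ∑ l ∈ Finset.range n, f l
      + i (m - 1) + j (n - 1))
    (hD' : D' = ∑ l ∈ Finset.range m, e l + ∑ l ∈ Finset.range n, f l
      + max (i (m - 1)) (j (n - 1)))
    (hBur₁ : (D : ℝ) / 6 - 2 ≤ wlen g) :
    D' ≤ D ∧ D ≤ 2 * D' ∧
      (D' : ℝ) / 12 - 2 ≤ wlen g ∧ (wlen g : ℝ) ≤ 3 * D' := by
  have hmono {k : ℕ} {u : ℕ → ℕ} (hu : ∀ a b, a < b → b < k → u a < u b) :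
      MonotoneOn u (Set.Iio k) :=
    StrictMonoOn.monotoneOn fun a _ b hb hab => hu a b hab hb
  have hwlen : wlen g ≤ 2 * D' := by
    rw [hg]
    refine (wlen_normalForm_le m n i j e f (hmono hi) (hmono hj)).trans ?_
    omega
  have hD'D : D' ≤ D := by omega
  refine ⟨hD'D, by omega, ?_, by exact_mod_cast (by omega : wlen g ≤ 3 * D')⟩
  linarith [(Nat.cast_le.mpr hD'D : (D' : ℝ) ≤ D)]

/-- Let `g ∈ F` have standard infinite normal form
`x_{i 0}^{e 0} ⋯ x_{i (m-1)}^{e (m-1)} x_{j (n-1)}^{-f (n-1)} ⋯ x_{j 0}^{-f 0}`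
(with strictly increasing indices and positive exponents), let
`D = Σ e + Σ f + i_m + j_n` and let `D' = Σ e + Σ f + max{i_m, j_n}` be the length
of its `L_∞` normal form.  Assuming Burillo's bounds `D/6 - 2 ≤ l(g) ≤ 3D`, one has
`D' ≤ D ≤ 2D'` and consequently `D'/12 - 2 ≤ l(g) ≤ 3 D'`; hence `L_∞` is a
quasigeodesic normal form. -/
theorem Linf_quasigeodesic (m n : ℕ) (hm : 0 < m) (hn : 0 < n)
    (i j e f : ℕ → ℕ)
    (hi : ∀ a b, a < b → b < m → i a < i b) (hj : ∀ a b, a < b → b < n → j a < j b)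
    (he : ∀ l < m, 0 < e l) (hf : ∀ l < n, 0 < f l)
    (g : ThompsonF)
    (hg : g = (((List.range m).map fun l => x (i l) ^ e l).prod) *
      (((List.range n).reverse.map fun l => (x (j l))⁻¹ ^ f l).prod))
    (D D' : ℕ)
    (hD : D = ∑ l ∈ Finset.range m, e l + ∑ l ∈ Finset.range n, f l
      + i (m - 1) + j (n - 1))
    (hD' : D' = ∑ l ∈ Finset.range m, e l + ∑ l ∈ Finset.range n, f l
      + max (i (m - 1)) (j (n - 1)))
    (hBur₁ : (D : ℝ) / 6 - 2 ≤ wlen g) (hBur₂ : (wlen g : ℝ) ≤ 3 * D) :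
    D' ≤ D ∧ D ≤ 2 * D' ∧
      (D' : ℝ) / 12 - 2 ≤ wlen g ∧ (wlen g : ℝ) ≤ 3 * D' :=
  Linf_quasigeodesic_general m n i j e f hi hj g hg D D' hD hD' hBur₁
end

section
/- Let w = x_{i_0}^{e_0} ⋯ x_{i_m}^{e_m} x_{j_n}^{-f_n} ⋯ x_{j_1}^{-f_1} x_0^{-f_0} be a reduced infinite normal form in F with f_0 ≥ 1. Then in F, w x_1^{-1} equals x_{i_0}^{e_0} ⋯ x_{i_m}^{e_m} x_{j_n}^{-f_n} ⋯ x_{j_{t+1}}^{-f_{t+1}} x_R^{-1} x_{j_t}^{-f_t} ⋯ x_0^{-f_0}, where R = 1 + f_0 + f_1 + ⋯ + f_t and t is the least index such that either t = n (and R > j_n) or R ≤ j_{t+1}. -/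
/-! Pushing `x_r⁻¹` leftward past a block `x_a⁻¹ ^ k` with `a < r` turns it into `x_{r+k}⁻¹`.
As long as every `j l` (for `l ≤ t`) is below the current index `1 + f 0 + ⋯ + f (l-1)`, which is
what the minimality of `t` together with `j 0 = 0` says, the trailing `x_1⁻¹` therefore passes the
whole tail `x_{j t}^{-f t} ⋯ x_0^{-f 0}` and emerges as `x_{R t}⁻¹`. -/

theorem x_mul_x_of_lt {a b : ℕ} (h : a < b) : x b * x a = x a * x (b + 1) :=
  PresentedGroup.mk_eq_mk_of_mul_inv_mem <| by
    rw [mul_inv_rev, ← mul_assoc]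
    exact ⟨a, b, h, rfl⟩

theorem x_inv_mul_x_inv_of_lt {a b : ℕ} (h : a < b) :
    (x a)⁻¹ * (x b)⁻¹ = (x (b + 1))⁻¹ * (x a)⁻¹ := by
  rw [← mul_inv_rev, x_mul_x_of_lt h, mul_inv_rev]

theorem x_inv_pow_mul_x_inv_of_lt {a b : ℕ} (h : a < b) (k : ℕ) :
    (x a)⁻¹ ^ k * (x b)⁻¹ = (x (b + k))⁻¹ * (x a)⁻¹ ^ k := by
  induction k generalizing b with
  | zero => simp
  | succ k ih =>
    rw [pow_succ, mul_assoc, x_inv_mul_x_inv_of_lt h, ← mul_assoc, ih (h.trans b.lt_succ_self),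
      mul_assoc, Nat.succ_add_eq_add_succ]

theorem prod_x_inv_pow_mul_x_inv (j f : ℕ → ℕ) (r t : ℕ)
    (hj_lt : ∀ l < t, j l < r + ∑ k ∈ Finset.range l, f k) :
    ((List.range t).reverse.map fun l => (x (j l))⁻¹ ^ f l).prod * (x r)⁻¹ =
      (x (r + ∑ l ∈ Finset.range t, f l))⁻¹ *
        ((List.range t).reverse.map fun l => (x (j l))⁻¹ ^ f l).prod := by
  induction t with
  | zero => simp
  | succ t ih =>
    simp only [List.range_succ, List.reverse_append, List.reverse_singleton, List.map_append,
      List.prod_append, List.map_singleton, List.prod_singleton, Finset.sum_range_succ]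
    rw [mul_assoc, ih fun l hl => hj_lt l (hl.trans t.lt_succ_self), ← mul_assoc,
      x_inv_pow_mul_x_inv_of_lt (hj_lt t t.lt_succ_self), mul_assoc, add_assoc]

theorem range_succ_eq_append_range' {t n : ℕ} (ht : t ≤ n) :
    List.range (n + 1) = List.range (t + 1) ++ List.range' (t + 1) (n - t) := by
  have h := List.range'_append_1 (s := 0) (m := t + 1) (n := n - t)
  rw [Nat.zero_add, show t + 1 + (n - t) = n + 1 by omega] at h
  rw [List.range_eq_range', List.range_eq_range', h]

theorem push_x1_inv_left_general (m n : ℕ) (i j e f : ℕ → ℕ)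
    (hj0 : j 0 = 0)
    (t : ℕ) (ht : t ≤ n)
    (htmin : ∀ t' < t, ¬((t' = n ∧ j n < 1 + ∑ l ∈ Finset.range (t' + 1), f l) ∨
      1 + ∑ l ∈ Finset.range (t' + 1), f l ≤ j (t' + 1))) :
    (((List.range (m + 1)).map fun l => x (i l) ^ e l).prod) *
      (((List.range (n + 1)).reverse.map fun l => (x (j l))⁻¹ ^ f l).prod) * (x 1)⁻¹ =
    (((List.range (m + 1)).map fun l => x (i l) ^ e l).prod) *
      (((List.range' (t + 1) (n - t)).reverse.map fun l => (x (j l))⁻¹ ^ f l).prod) *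
      (x (1 + ∑ l ∈ Finset.range (t + 1), f l))⁻¹ *
      (((List.range (t + 1)).reverse.map fun l => (x (j l))⁻¹ ^ f l).prod) := by
  have hj_lt : ∀ l < t + 1, j l < 1 + ∑ k ∈ Finset.range l, f k := by
    rintro (_ | l) hl
    · simp [hj0]
    · exact not_le.mp (not_or.mp (htmin l (Nat.succ_lt_succ_iff.mp hl))).2
  rw [range_succ_eq_append_range' ht, List.reverse_append, List.map_append, List.prod_append,
    mul_assoc _ _ (x 1)⁻¹, mul_assoc _ _ (x 1)⁻¹, prod_x_inv_pow_mul_x_inv j f 1 (t + 1) hj_lt]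
  simp only [mul_assoc]

/-- Let `w = x_{i 0}^{e 0} ⋯ x_{i m}^{e m} x_{j n}^{-f n} ⋯ x_{j 1}^{-f 1} x_0^{-f 0}`
be a reduced infinite normal form in Thompson's group `F` with `f 0 ≥ 1`.  Pushing the
trailing `x_1⁻¹` leftward using the relations `x_i⁻¹ x_j⁻¹ = x_{j+1}⁻¹ x_i⁻¹` (`i < j`),
one gets, with `R t = 1 + f 0 + ⋯ + f t` and `t` the least index such that either
`t = n` (and then `R t > j n`) or `R t ≤ j (t+1)`:
`w x_1⁻¹ = x_{i 0}^{e 0} ⋯ x_{i m}^{e m} x_{j n}^{-f n} ⋯ x_{j (t+1)}^{-f (t+1)}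
  x_{R t}⁻¹ x_{j t}^{-f t} ⋯ x_0^{-f 0}`. -/
theorem push_x1_inv_left (m n : ℕ) (i j e f : ℕ → ℕ)
    (hi : ∀ a b, a < b → b ≤ m → i a < i b)
    (hjmono : ∀ a b, a < b → b ≤ n → j a < j b)
    (hj0 : j 0 = 0)
    (he : ∀ l ≤ m, 0 < e l) (hf : ∀ l ≤ n, 0 < f l)
    (t : ℕ) (ht : t ≤ n)
    (htcase : (t = n ∧ j n < 1 + ∑ l ∈ Finset.range (t + 1), f l) ∨
      1 + ∑ l ∈ Finset.range (t + 1), f l ≤ j (t + 1))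
    (htmin : ∀ t' < t, ¬((t' = n ∧ j n < 1 + ∑ l ∈ Finset.range (t' + 1), f l) ∨
      1 + ∑ l ∈ Finset.range (t' + 1), f l ≤ j (t' + 1))) :
    (((List.range (m + 1)).map fun l => x (i l) ^ e l).prod) *
      (((List.range (n + 1)).reverse.map fun l => (x (j l))⁻¹ ^ f l).prod) * (x 1)⁻¹ =
    (((List.range (m + 1)).map fun l => x (i l) ^ e l).prod) *
      (((List.range' (t + 1) (n - t)).reverse.map fun l => (x (j l))⁻¹ ^ f l).prod) *
      (x (1 + ∑ l ∈ Finset.range (t + 1), f l))⁻¹ *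
      (((List.range (t + 1)).reverse.map fun l => (x (j l))⁻¹ ^ f l).prod) :=
  push_x1_inv_left_general m n i j e f hj0 t ht htmin
end
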